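/- Let D ≥ 1, let ι be a finite index type, let v : ι → ℝ^D be a linearly independent family, let L, g : ι → ℝ be positive, and let W : ℝ → ℝ. Then there exists an invertible linear map G of ℝ^D such that for every linear map F : ℝ^D → ℝ^D: Σ_{i ∈ ι} W(‖F(v i)‖ / (L i · g i)) = Σ_{i ∈ ι} W(‖(F ∘ G⁻¹)(v i)‖ / L i). (For a homogeneously growing lattice of order 1 — a 'fluid' — the multiplicative decomposition of the deformation gradient holds: W_g(F) = W_i(F·G⁻¹) for all F.) -/

import Mathlib

/-!
Growth by recombination rescales each spring vector `v i` by `g i`. Since the `v i` are linearly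
independent, they extend to a basis, and the linear map `G` scaling the `i`-th vector by `g i`
(and fixing the added ones) is invertible. Then `‖F (G⁻¹ (v i))‖ = ‖F (v i)‖ / g i`, which turns
each term of `W_i(F G⁻¹)` into the corresponding term of `W_g(F)`.
-/

theorem Module.Basis.sumExtend_apply_inl {K V ι : Type*} [DivisionRing K] [AddCommGroup V]
    [Module K V] {v : ι → V} (hv : LinearIndependent K v) (i : ι) :
    Module.Basis.sumExtend hv (Sum.inl i) = v i := by
  simp only [Module.Basis.sumExtend, Module.Basis.reindex_apply, Module.Basis.extend_apply_self]
  rfl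

theorem LinearIndependent.exists_linearEquiv_apply_eq_smul {K V ι : Type*} [DivisionRing K]
    [AddCommGroup V] [Module K V] {v : ι → V} (hv : LinearIndependent K v) (c : ι → Kˣ) :
    ∃ G : V ≃ₗ[K] V, ∀ i, G (v i) = c i • v i := by
  set b := Module.Basis.sumExtend hv
  refine ⟨b.equiv (b.unitsSMul (Sum.elim c 1)) (Equiv.refl _), fun i => ?_⟩
  rw [← Module.Basis.sumExtend_apply_inl hv i, Module.Basis.equiv_apply, Equiv.refl_apply,
    Module.Basis.unitsSMul_apply, Sum.elim_inl]

theorem LinearIndependent.exists_linearEquiv_symm_apply_eq_inv_smul {K V ι : Type*}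
    [DivisionRing K] [AddCommGroup V] [Module K V] {v : ι → V} (hv : LinearIndependent K v)
    {g : ι → K} (hg : ∀ i, g i ≠ 0) : ∃ G : V ≃ₗ[K] V, ∀ i, G.symm (v i) = (g i)⁻¹ • v i := by
  obtain ⟨G, hG⟩ := hv.exists_linearEquiv_apply_eq_smul fun i => (Units.mk0 (g i) (hg i))⁻¹
  exact ⟨G.symm, fun i => by simpa [Units.smul_def] using hG i⟩

theorem multiplicative_decomposition_order_one_general
    (D : ℕ) (ι : Type) [Fintype ι]
    (v : ι → EuclideanSpace ℝ (Fin D)) (hv : LinearIndependent ℝ v)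
    (L g : ι → ℝ) (hg : ∀ i, 0 < g i) (W : ℝ → ℝ) :
    ∃ G : EuclideanSpace ℝ (Fin D) ≃ₗ[ℝ] EuclideanSpace ℝ (Fin D),
      ∀ F : EuclideanSpace ℝ (Fin D) →ₗ[ℝ] EuclideanSpace ℝ (Fin D),
        (∑ i : ι, W (‖F (v i)‖ / (L i * g i))) =
          ∑ i : ι, W (‖(F ∘ₗ G.symm.toLinearMap) (v i)‖ / L i) := by
  obtain ⟨G, hG⟩ := hv.exists_linearEquiv_symm_apply_eq_inv_smul fun i => (hg i).ne'
  refine ⟨G, fun F => Finset.sum_congr rfl fun i _ => congrArg W ?_⟩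
  rw [LinearMap.comp_apply, LinearEquiv.coe_coe, hG i, map_smul, norm_smul, Real.norm_eq_abs,
    abs_of_pos (inv_pos.mpr (hg i)), inv_mul_eq_div, div_div, mul_comm (g i)]

/-- For a homogeneously growing lattice of order 1 (a "fluid") the multiplicative decomposition
of the deformation gradient holds: there is an invertible linear map `G` with
`W_g(F) = W_i(F ∘ G⁻¹)` for all linear maps `F`. -/
theorem multiplicative_decomposition_order_one
    (D : ℕ) (hD : 1 ≤ D) (ι : Type) [Fintype ι]
    (v : ι → EuclideanSpace ℝ (Fin D)) (hv : LinearIndependent ℝ v)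
    (L g : ι → ℝ) (hL : ∀ i, 0 < L i) (hg : ∀ i, 0 < g i) (W : ℝ → ℝ) :
    ∃ G : EuclideanSpace ℝ (Fin D) ≃ₗ[ℝ] EuclideanSpace ℝ (Fin D),
      ∀ F : EuclideanSpace ℝ (Fin D) →ₗ[ℝ] EuclideanSpace ℝ (Fin D),
        (∑ i : ι, W (‖F (v i)‖ / (L i * g i))) =
          ∑ i : ι, W (‖(F ∘ₗ G.symm.toLinearMap) (v i)‖ / L i) :=
  multiplicative_decomposition_order_one_general D ι v hv L g hg W
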